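/- Fix integers n ≥ 2 and k ≥ 3, set γ_k := 1/2 − 1/k, and let 𝔅 be a Bryant soliton profile. For any A₄ > 0 there exist a bounded function β : (0,∞) → ℝ, a constant B₄ > 0, and a time τ₄ < ∞, all depending only on n, k, A₄ and 𝔅, such that the functions z_±(r,τ) := 𝔅(A₄ r) ± e^{−2γ_k τ} β(r) satisfy T_r[z₊] ≥ 0 (supersolution) and T_r[z₋] ≤ 0 (subsolution) at every point of the region 0 < r ≤ B₄ e^{γ_k τ}, τ ≥ τ₄. -/

import Mathlib

open Topology Filter Asymptotics Set

/-- `γ_k = 1/2 - 1/k`. -/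
noncomputable def gam (k : ℕ) : ℝ := 1/2 - 1/(k:ℝ)

/-- The elliptic operator
`E_r[z] = z z'' - (1/2)(z')² + (n-1-z)z'/r + 2(n-1)(1-z)z/r²`. -/
noncomputable def Eop (n : ℕ) (z : ℝ → ℝ) (r : ℝ) : ℝ :=
  z r * deriv (deriv z) r - (1/2) * (deriv z r)^2
    + ((n:ℝ) - 1 - z r) * deriv z r / r
    + 2 * ((n:ℝ) - 1) * (1 - z r) * z r / r^2

/-- A Bryant soliton profile: a smooth decreasing function `𝔅 : [0,∞) → (0,1]` with
`𝔅(0)=1`, `𝔅'(0)=0`, `𝔅'<0` on `(0,∞)`, solving `E_r[𝔅]=0`, with the expansions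
`𝔅(ρ) = 1 - 𝔟ρ² + O(ρ⁴)` at `0` and `𝔅(ρ) = ρ⁻² + 𝔟₂ρ⁻⁴ + O(ρ⁻⁶)` at `∞`
(differentiable term by term), and with `-ρ𝔅'(ρ) ≥ c̃ min(ρ², ρ⁻²)`. -/
structure BryantProfile (n : ℕ) where
  toFun : ℝ → ℝ
  b : ℝ
  b2 : ℝ
  ctilde : ℝ
  smooth : ContDiffOn ℝ (⊤ : ℕ∞) toFun (Set.Ici 0)
  mem_Ioc : ∀ r : ℝ, 0 ≤ r → toFun r ∈ Set.Ioc (0:ℝ) 1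
  val_zero : toFun 0 = 1
  deriv_zero : deriv toFun 0 = 0
  deriv_neg : ∀ r : ℝ, 0 < r → deriv toFun r < 0
  soliton : ∀ r : ℝ, 0 < r → Eop n toFun r = 0
  b_pos : 0 < b
  expand_zero : (fun ρ => toFun ρ - (1 - b * ρ^2)) =O[𝓝[>] (0:ℝ)] fun ρ => ρ^4
  expand_zero_deriv :
    (fun ρ => deriv toFun ρ + 2 * b * ρ) =O[𝓝[>] (0:ℝ)] fun ρ => ρ^3
  expand_top :
    (fun ρ => toFun ρ - (ρ ^ (-2:ℝ) + b2 * ρ ^ (-4:ℝ))) =O[atTop] fun ρ => ρ ^ (-6:ℝ)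
  expand_top_deriv :
    (fun ρ => deriv toFun ρ - (-2 * ρ ^ (-3:ℝ) - 4 * b2 * ρ ^ (-5:ℝ)))
      =O[atTop] fun ρ => ρ ^ (-7:ℝ)
  ctilde_pos : 0 < ctilde
  deriv_lower : ∀ r : ℝ, 0 < r → ctilde * min (r^2) (r ^ (-2:ℝ)) ≤ -(r * deriv toFun r)

/-- The tip-region operator
`T_r[z] = e^{-2γ_k τ}(z_τ + (r/k) z_r) - E_r[z]/(2(n-1))` applied to `z = z(r,τ)`. -/
noncomputable def Trop (n k : ℕ) (z : ℝ → ℝ → ℝ) (r τ : ℝ) : ℝ :=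
  Real.exp (-2 * gam k * τ) * (deriv (z r) τ + (r/(k:ℝ)) * deriv (fun x => z x τ) r)
    - Eop n (fun x => z x τ) r / (2 * ((n:ℝ) - 1))

/-!
Take `β = c (g - 1)` with `g = 𝔅(A₄ ·)`, so that `z_± = (1 ± m) g ∓ m` with `m = c e^{-2γ_k τ}`.
Since `E_r[g] = 0`, one gets `E_r[z_±] = ±m (1 ± m) Q`, where `Q` is the quadratic part of `E_r`
evaluated at `g - 1`, and the soliton equation turns `g r Q` into `-r g'²/2 - (n-1)(1 - g)|g'|`.
Hence `Q ≤ 0` and `|Q| ≥ (n-1)(1 - g)|g'| / (g r)`. The `τ`-derivative has the right sign, and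
the reaction term `m (1 ± m) |Q|` beats the transport term `(r/k) z_r` once
`2ρ²𝔅(ρ) ≤ c k A₄² (1 - 𝔅(ρ))`; this holds for large `c` because `ρ²𝔅/(1 - 𝔅)` is bounded on
`(0, ∞)`, by `-ρ𝔅' ≥ c̃ρ²` near `0` and `𝔅 = O(ρ⁻²)` at `∞`. For the subsolution one also needs
`1 - m ≥ 0`, which fixes `τ₄`.
-/

/-- The homogeneous quadratic part of `Eop`: `E_r[1 + h] = EopQuad n h r + (terms linear in h)`. -/
noncomputable def EopQuad (n : ℕ) (h : ℝ → ℝ) (r : ℝ) : ℝ :=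
  h r * deriv (deriv h) r - (1/2) * (deriv h r)^2 - h r * deriv h r / r
    - 2 * ((n:ℝ) - 1) * (h r)^2 / r^2

section Operator

variable {n : ℕ} {z : ℝ → ℝ} {r : ℝ}

theorem Eop_affine (m : ℝ) :
    Eop n (fun x => (1 + m) * z x - m) r
      = (1 + m) * Eop n z r + (1 + m) * m * EopQuad n (fun x => z x - 1) r := by
  have hz : deriv (fun x => (1 + m) * z x - m) = fun x => (1 + m) * deriv z x := by
    rw [deriv_sub_const_fun, deriv_const_mul_field']
  simp only [Eop, EopQuad, hz, deriv_sub_const_fun, deriv_const_mul_field']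
  ring

theorem Eop_comp_mul_left (f : ℝ → ℝ) {A : ℝ} (hA : A ≠ 0) (hr : r ≠ 0) :
    Eop n (fun x => f (A * x)) r = A ^ 2 * Eop n f (A * r) := by
  have hf : deriv (fun x => f (A * x)) = fun x => A * deriv f (A * x) :=
    funext fun x => by simpa using deriv_comp_mul_left A f x
  have hf' : deriv (fun x => A * deriv f (A * x)) r = A * (A * deriv (deriv f) (A * r)) := by
    rw [deriv_const_mul_field']
    simpa using congrArg (A * ·) (deriv_comp_mul_left A (deriv f) r)
  simp only [Eop, hf, hf']
  field_simp

theorem mul_EopQuad_of_Eop_eq_zero (hE : Eop n z r = 0) (hr : r ≠ 0) :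
    z r * r * EopQuad n (fun x => z x - 1) r
      = -(r * deriv z r ^ 2) / 2 + ((n:ℝ) - 1) * (1 - z r) * deriv z r := by
  simp only [Eop] at hE
  simp only [EopQuad, deriv_sub_const_fun]
  linear_combination (norm := skip) ((z r - 1) * r) * hE
  field_simp
  ring

theorem le_mul_neg_EopQuad (hE : Eop n z r = 0) (hr : 0 < r) :
    ((n:ℝ) - 1) * (1 - z r) * -deriv z r ≤ z r * r * -EopQuad n (fun x => z x - 1) r := by
  have h := mul_EopQuad_of_Eop_eq_zero hE hr.ne'
  nlinarith [mul_nonneg hr.le (sq_nonneg (deriv z r))]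

theorem EopQuad_nonpos (hn : 1 ≤ n) (hE : Eop n z r = 0) (hr : 0 < r) (hz : 0 < z r)
    (hz₁ : z r ≤ 1) (hz' : deriv z r ≤ 0) : EopQuad n (fun x => z x - 1) r ≤ 0 := by
  have hn' : (0:ℝ) ≤ (n:ℝ) - 1 := by
    rw [sub_nonneg]; exact_mod_cast hn
  have h := (mul_nonneg (mul_nonneg hn' (sub_nonneg.mpr hz₁)) (neg_nonneg.mpr hz')).trans
    (le_mul_neg_EopQuad hE hr)
  exact neg_nonneg.mp (nonneg_of_mul_nonneg_right h (mul_pos hz hr))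

theorem Trop_add_exp_mul (k : ℕ) (hE : Eop n z r = 0) (q τ : ℝ) :
    Trop n k (fun r' τ' => z r' + Real.exp (-2 * gam k * τ') * (q * (z r' - 1))) r τ
      = Real.exp (-2 * gam k * τ) * (2 * gam k * q * Real.exp (-2 * gam k * τ) * (1 - z r)
          + r / k * (1 + q * Real.exp (-2 * gam k * τ)) * deriv z r)
        - (1 + q * Real.exp (-2 * gam k * τ)) * (q * Real.exp (-2 * gam k * τ))
          * EopQuad n (fun x => z x - 1) r / (2 * ((n:ℝ) - 1)) := by
  have hτ : HasDerivAt (fun τ' => z r + Real.exp (-2 * gam k * τ') * (q * (z r - 1)))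
      (Real.exp (-2 * gam k * τ) * (-2 * gam k) * (q * (z r - 1))) τ :=
    ((((hasDerivAt_id τ).const_mul (-2 * gam k)).exp.congr_deriv (by simp)).mul_const _).const_add
      _
  have hsec : (fun x => z x + Real.exp (-2 * gam k * τ) * (q * (z x - 1)))
      = fun x => (1 + q * Real.exp (-2 * gam k * τ)) * z x - q * Real.exp (-2 * gam k * τ) := by
    funext x; ring
  simp only [Trop]
  rw [hτ.deriv, hsec, deriv_sub_const, deriv_const_mul_field', Eop_affine, hE]
  ring

theorem Trop_add_exp_mul_nonneg (k : ℕ) (hn : 2 ≤ n) (hγ : 0 ≤ gam k) (hk : 0 < k)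
    (hE : Eop n z r = 0) (hr : 0 < r) (hz : 0 < z r) (hz₁ : z r ≤ 1) (hz' : deriv z r ≤ 0)
    {c : ℝ} (hc : 0 ≤ c) (hratio : 2 * z r * r ^ 2 ≤ c * k * (1 - z r)) (τ : ℝ) :
    0 ≤ Trop n k (fun r' τ' => z r' + Real.exp (-2 * gam k * τ') * (c * (z r' - 1))) r τ := by
  rw [Trop_add_exp_mul k hE c τ]
  set E := Real.exp (-2 * gam k * τ)
  set Q := EopQuad n (fun x => z x - 1) r
  have hE₀ : 0 < E := Real.exp_pos _
  have hn' : (0:ℝ) < 2 * ((n:ℝ) - 1) := by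
    have : (2:ℝ) ≤ n := by exact_mod_cast hn
    linarith
  have hk' : (0:ℝ) < k := by exact_mod_cast hk
  have hkey : r / k * -deriv z r ≤ c * -Q / (2 * ((n:ℝ) - 1)) := by
    rw [div_mul_eq_mul_div, div_le_div_iff₀ hk' hn']
    refine le_of_mul_le_mul_left ?_ (mul_pos hz hr)
    have hn₁ : (0:ℝ) ≤ ((n:ℝ) - 1) * -deriv z r := mul_nonneg (by linarith) (neg_nonneg.mpr hz')
    calc z r * r * (r * -deriv z r * (2 * ((n:ℝ) - 1)))
        = ((n:ℝ) - 1) * -deriv z r * (2 * z r * r ^ 2) := by ring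
      _ ≤ ((n:ℝ) - 1) * -deriv z r * (c * k * (1 - z r)) :=
        mul_le_mul_of_nonneg_left hratio hn₁
      _ = c * k * (((n:ℝ) - 1) * (1 - z r) * -deriv z r) := by ring
      _ ≤ c * k * (z r * r * -Q) :=
        mul_le_mul_of_nonneg_left (le_mul_neg_EopQuad hE hr) (by positivity)
      _ = z r * r * (c * -Q * k) := by ring
  have hdecay : 0 ≤ E * (2 * gam k * c * E * (1 - z r)) :=
    mul_nonneg hE₀.le (mul_nonneg (by positivity) (sub_nonneg.mpr hz₁))
  have hdrift := mul_le_mul_of_nonneg_left hkey (mul_nonneg hE₀.le (by positivity : 0 ≤ 1 + c * E))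
  linear_combination hdecay + hdrift

theorem Trop_sub_exp_mul_nonpos (k : ℕ) (hn : 1 ≤ n) (hγ : 0 ≤ gam k)
    (hE : Eop n z r = 0) (hr : 0 < r) (hz : 0 < z r) (hz₁ : z r ≤ 1) (hz' : deriv z r ≤ 0)
    {c τ : ℝ} (hc : 0 ≤ c) (hcτ : c * Real.exp (-2 * gam k * τ) ≤ 1) :
    Trop n k (fun r' τ' => z r' - Real.exp (-2 * gam k * τ') * (c * (z r' - 1))) r τ ≤ 0 := by
  have hsub : (fun r' τ' => z r' - Real.exp (-2 * gam k * τ') * (c * (z r' - 1)))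
      = fun r' τ' => z r' + Real.exp (-2 * gam k * τ') * (-c * (z r' - 1)) := by
    funext r' τ'; ring
  rw [hsub, Trop_add_exp_mul k hE (-c) τ]
  set E := Real.exp (-2 * gam k * τ)
  have hE₀ : 0 < E := Real.exp_pos _
  have hn' : (0:ℝ) ≤ 2 * ((n:ℝ) - 1) := by
    have : (1:ℝ) ≤ n := by exact_mod_cast hn
    linarith
  have hQ := EopQuad_nonpos hn hE hr hz hz₁ hz'
  have hcE : 0 ≤ 1 - c * E := sub_nonneg.mpr hcτ
  have hdecay : 0 ≤ E * (2 * gam k * c * E * (1 - z r)) :=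
    mul_nonneg hE₀.le (mul_nonneg (by positivity) (sub_nonneg.mpr hz₁))
  have hdrift : 0 ≤ E * (r / k * (1 - c * E) * -deriv z r) :=
    mul_nonneg hE₀.le (mul_nonneg (by positivity) (neg_nonneg.mpr hz'))
  have hreact : 0 ≤ (1 - c * E) * (c * E) * -EopQuad n (fun x => z x - 1) r / (2 * ((n:ℝ) - 1)) :=
    div_nonneg (mul_nonneg (by positivity) (neg_nonneg.mpr hQ)) hn'
  linear_combination hdecay + hdrift + hreact

end Operator

theorem gam_pos {k : ℕ} (hk : 2 < k) : 0 < gam k := by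
  have hk' : (2:ℝ) < k := by exact_mod_cast hk
  rw [gam, sub_pos]
  exact one_div_lt_one_div_of_lt two_pos hk'

theorem mul_exp_neg_mul_le_one {a c τ : ℝ} (ha : 0 < a) (hc : 0 < c) (hτ : Real.log c / a ≤ τ) :
    c * Real.exp (-a * τ) ≤ 1 := by
  rw [div_le_iff₀ ha] at hτ
  rw [← Real.exp_log hc, ← Real.exp_add, Real.exp_le_one_iff]
  linarith

namespace BryantProfile

variable {n : ℕ} (𝔅 : BryantProfile n) {A r : ℝ}

theorem differentiableAt {ρ : ℝ} (hρ : 0 < ρ) : DifferentiableAt ℝ 𝔅.toFun ρ :=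
  (𝔅.smooth.contDiffAt (Ici_mem_nhds hρ)).differentiableAt (by simp)

theorem antitoneOn : AntitoneOn 𝔅.toFun (Ici 0) :=
  antitoneOn_of_deriv_nonpos (convex_Ici 0) 𝔅.smooth.continuousOn
    (by rw [interior_Ici]; exact fun x hx => (𝔅.differentiableAt hx).differentiableWithinAt)
    (by rw [interior_Ici]; exact fun x hx => (𝔅.deriv_neg x hx).le)

theorem ctilde_mul_sq_le_one_sub {ρ : ℝ} (hρ₀ : 0 ≤ ρ) (hρ₁ : ρ ≤ 1) :
    𝔅.ctilde / 2 * ρ ^ 2 ≤ 1 - 𝔅.toFun ρ := by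
  let φ : ℝ → ℝ := fun x => 1 - 𝔅.toFun x - 𝔅.ctilde / 2 * x ^ 2
  have hφ : ∀ x, 0 < x → HasDerivAt φ (-deriv 𝔅.toFun x - 𝔅.ctilde * x) x := fun x hx => by
    refine (((𝔅.differentiableAt hx).hasDerivAt.const_sub 1).fun_sub
      ((hasDerivAt_pow 2 x).const_mul (𝔅.ctilde / 2))).congr_deriv ?_
    norm_num
    ring
  have hmono : MonotoneOn φ (Icc 0 1) := by
    refine monotoneOn_of_deriv_nonneg (convex_Icc 0 1) ?_ ?_ ?_
    · exact (continuousOn_const.sub (𝔅.smooth.continuousOn.mono Icc_subset_Ici_self)).sub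
        (by fun_prop)
    · rw [interior_Icc]
      exact fun x hx => (hφ x hx.1).differentiableAt.differentiableWithinAt
    · rw [interior_Icc]
      intro x hx
      have hmin : min (x ^ 2) (x ^ (-2:ℝ)) = x ^ 2 := by
        refine min_eq_left ?_
        rw [Real.rpow_neg hx.1.le, show (2:ℝ) = ((2:ℕ):ℝ) by norm_num, Real.rpow_natCast]
        exact (pow_le_one₀ hx.1.le hx.2.le).trans (one_le_inv₀ (pow_pos hx.1 2) |>.mpr
          (pow_le_one₀ hx.1.le hx.2.le))
      have h := 𝔅.deriv_lower x hx.1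
      rw [hmin] at h
      rw [(hφ x hx.1).deriv]
      refine (mul_nonneg_iff_of_pos_left hx.1).mp ?_
      linarith
  have h := hmono ⟨le_rfl, zero_le_one⟩ ⟨hρ₀, hρ₁⟩ hρ₀
  simp only [φ, 𝔅.val_zero] at h
  linarith

theorem isBigO_atTop : 𝔅.toFun =O[atTop] fun ρ => ρ ^ (-2:ℝ) := by
  have hle : ∀ a : ℝ, a ≤ -2 → (fun ρ : ℝ => ρ ^ a) =O[atTop] fun ρ => ρ ^ (-2:ℝ) := by
    intro a ha
    refine IsBigO.of_bound 1 ?_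
    filter_upwards [eventually_ge_atTop 1] with ρ hρ
    rw [Real.norm_of_nonneg (by positivity), Real.norm_of_nonneg (by positivity), one_mul]
    exact Real.rpow_le_rpow_of_exponent_le hρ ha
  have hmain : (fun ρ => ρ ^ (-2:ℝ) + 𝔅.b2 * ρ ^ (-4:ℝ)) =O[atTop] fun ρ => ρ ^ (-2:ℝ) :=
    (hle _ le_rfl).add ((hle _ (by norm_num)).const_mul_left _)
  simpa using 𝔅.expand_top.trans (hle _ (by norm_num)) |>.add hmain

theorem exists_mul_sq_le : ∃ M, ∀ ρ, 1 ≤ ρ → 𝔅.toFun ρ * ρ ^ 2 ≤ M := by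
  obtain ⟨C, hC⟩ := 𝔅.isBigO_atTop.bound
  obtain ⟨R, hR⟩ := eventually_atTop.mp (hC.and (eventually_gt_atTop 0))
  refine ⟨max C (R ^ 2), fun ρ hρ => ?_⟩
  have h𝔅 := 𝔅.mem_Ioc ρ (by linarith)
  rcases le_total R ρ with hRρ | hρR
  · obtain ⟨hb, hpos⟩ := hR ρ hRρ
    rw [Real.norm_of_nonneg h𝔅.1.le, Real.norm_of_nonneg (Real.rpow_nonneg hpos.le _),
      Real.rpow_neg hpos.le, show (2:ℝ) = ((2:ℕ):ℝ) by norm_num, Real.rpow_natCast] at hb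
    refine le_max_of_le_left ?_
    calc 𝔅.toFun ρ * ρ ^ 2 ≤ C * (ρ ^ 2)⁻¹ * ρ ^ 2 := by gcongr
      _ = C := by field_simp
  · refine le_max_of_le_right ?_
    calc 𝔅.toFun ρ * ρ ^ 2 ≤ 1 * ρ ^ 2 := by gcongr; exact h𝔅.2
      _ ≤ R ^ 2 := by rw [one_mul]; gcongr

theorem exists_mul_sq_le_mul_one_sub :
    ∃ K, 0 < K ∧ ∀ ρ, 0 < ρ → 𝔅.toFun ρ * ρ ^ 2 ≤ K * (1 - 𝔅.toFun ρ) := by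
  obtain ⟨M, hM⟩ := 𝔅.exists_mul_sq_le
  have hc := 𝔅.ctilde_pos
  refine ⟨max M 1 * (2 / 𝔅.ctilde), mul_pos (lt_max_of_lt_right one_pos) (div_pos two_pos hc),
    fun ρ hρ => ?_⟩
  have h𝔅 := 𝔅.mem_Ioc ρ hρ.le
  have hθ : ∀ x, 0 ≤ x → x ≤ 1 → x ^ 2 ≤ 2 / 𝔅.ctilde * (1 - 𝔅.toFun x) := fun x hx₀ hx₁ => by
    have h := 𝔅.ctilde_mul_sq_le_one_sub hx₀ hx₁
    rw [div_mul_eq_mul_div, le_div_iff₀ hc]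
    linarith
  rw [mul_assoc]
  rcases le_total ρ 1 with hρ1 | hρ1
  · calc 𝔅.toFun ρ * ρ ^ 2 ≤ ρ ^ 2 := mul_le_of_le_one_left (sq_nonneg ρ) h𝔅.2
      _ ≤ 2 / 𝔅.ctilde * (1 - 𝔅.toFun ρ) := hθ ρ hρ.le hρ1
      _ ≤ _ := le_mul_of_one_le_left (by linarith [hθ ρ hρ.le hρ1, sq_nonneg ρ]) (le_max_right _ _)
  · have hanti := 𝔅.antitoneOn (show (1:ℝ) ∈ Ici 0 by simp) (show ρ ∈ Ici 0 from hρ.le) hρ1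
    have hone : 1 ≤ 2 / 𝔅.ctilde * (1 - 𝔅.toFun ρ) := by
      calc (1:ℝ) = 1 ^ 2 := (one_pow 2).symm
        _ ≤ 2 / 𝔅.ctilde * (1 - 𝔅.toFun 1) := hθ 1 zero_le_one le_rfl
        _ ≤ 2 / 𝔅.ctilde * (1 - 𝔅.toFun ρ) := by gcongr
    calc 𝔅.toFun ρ * ρ ^ 2 ≤ max M 1 := le_max_of_le_left (hM ρ hρ1)
      _ ≤ _ := le_mul_of_one_le_right (le_max_of_le_right zero_le_one) hone

theorem Eop_comp_mul_left_eq_zero (hA : 0 < A) (hr : 0 < r) :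
    Eop n (fun x => 𝔅.toFun (A * x)) r = 0 := by
  rw [Eop_comp_mul_left _ hA.ne' hr.ne', 𝔅.soliton _ (mul_pos hA hr), mul_zero]

theorem deriv_comp_mul_left_neg (hA : 0 < A) (hr : 0 < r) :
    deriv (fun x => 𝔅.toFun (A * x)) r < 0 := by
  rw [show deriv (fun x => 𝔅.toFun (A * x)) r = A * deriv 𝔅.toFun (A * r) by
    simpa using deriv_comp_mul_left A 𝔅.toFun r]
  exact mul_neg_of_pos_of_neg hA (𝔅.deriv_neg _ (mul_pos hA hr))

end BryantProfile

theorem stmt5 (n k : ℕ) (hn : 2 ≤ n) (hk : 3 ≤ k)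
    (𝔅 : BryantProfile n) (A₄ : ℝ) (hA₄ : 0 < A₄) :
    ∃ (β : ℝ → ℝ) (M B₄ τ₄ : ℝ), (∀ r : ℝ, 0 < r → |β r| ≤ M) ∧ 0 < B₄ ∧
      ∀ r τ : ℝ, τ₄ ≤ τ → 0 < r → r ≤ B₄ * Real.exp (gam k * τ) →
        0 ≤ Trop n k (fun r' τ' => 𝔅.toFun (A₄ * r') + Real.exp (-2 * gam k * τ') * β r') r τ ∧
        Trop n k (fun r' τ' => 𝔅.toFun (A₄ * r') - Real.exp (-2 * gam k * τ') * β r') r τ ≤ 0 := by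
  obtain ⟨K, hK, hratio⟩ := 𝔅.exists_mul_sq_le_mul_one_sub
  have hγ : 0 < gam k := gam_pos hk
  have hk₀ : 0 < k := by omega
  set c := 2 * K / (k * A₄ ^ 2) with hc_def
  have hc : 0 < c := by positivity
  refine ⟨fun r => c * (𝔅.toFun (A₄ * r) - 1), c, 1, Real.log c / (2 * gam k),
    fun r hr => ?_, one_pos, fun r τ hτ hr _ => ?_⟩
  · have h𝔅 := 𝔅.mem_Ioc (A₄ * r) (mul_pos hA₄ hr).le
    rw [abs_le]
    constructor <;> nlinarith [h𝔅.1, h𝔅.2]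
  have hρ := mul_pos hA₄ hr
  have h𝔅 := 𝔅.mem_Ioc (A₄ * r) hρ.le
  have hratio' : 2 * 𝔅.toFun (A₄ * r) * r ^ 2 ≤ c * k * (1 - 𝔅.toFun (A₄ * r)) := by
    have hck : c * k = 2 * K / A₄ ^ 2 := by
      rw [hc_def]; field_simp
    have h := hratio _ hρ
    rw [hck, div_mul_eq_mul_div, le_div_iff₀ (by positivity)]
    rw [mul_pow] at h
    linarith
  have hcτ : c * Real.exp (-2 * gam k * τ) ≤ 1 := by
    simpa [neg_mul] using mul_exp_neg_mul_le_one (by positivity : 0 < 2 * gam k) hc hτ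
  have hE := 𝔅.Eop_comp_mul_left_eq_zero hA₄ hr
  have hz' := (𝔅.deriv_comp_mul_left_neg hA₄ hr).le
  exact ⟨Trop_add_exp_mul_nonneg k hn hγ.le hk₀ hE hr h𝔅.1 h𝔅.2 hz' hc.le hratio' τ,
    Trop_sub_exp_mul_nonpos k (by omega) hγ.le hE hr h𝔅.1 h𝔅.2 hz' hc.le hcτ⟩
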